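/- arXiv:1511.05864 — 2 statements merged into one kernel-verified Lean document; each statement's English description precedes it below -/
import Mathlib

section
/- In the setting of the primal-dual iteration with fixed stepsizes τ₀, σ₀ > 0 satisfying τ₀σ₀L² < 1 (v_{k+1} = prox_{σ₀ G}(v_k + σ₀(Xᵀy − XᵀX w'_k)), w_{k+1} = prox_{τ₀ F}(w_k + τ₀ XᵀX v_{k+1}), w'_{k+1} = 2 w_{k+1} − w_k, w'_0 = w_0), if a saddle point of φ(w, v) = ⟨Xᵀ(y − Xw), v⟩ + F(w) − G(v) exists, then there exists a saddle point (ŵ, v̂) of φ such that (w_k, v_k) → (ŵ, v̂) as k → ∞. -/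
open Matrix Finset

noncomputable section

/-- Euclidean inner product on ℝ^p. -/
def dotp {p : ℕ} (x y : Fin p → ℝ) : ℝ := ∑ i, x i * y i

/-- Squared Euclidean norm on ℝ^p. -/
def normSq {p : ℕ} (x : Fin p → ℝ) : ℝ := ∑ i, x i ^ 2

/-- ℓ2-operator norm of a real matrix. -/
def opNorm {m k : Type} [Fintype m] [Fintype k] (A : Matrix m k ℝ) : ℝ :=
  sSup {c | ∃ z : k → ℝ, (∑ i, z i ^ 2) ≤ 1 ∧ c = Real.sqrt (∑ i, (A.mulVec z) i ^ 2)}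

/-- `G` is a norm on ℝ^p. -/
def IsNorm {p : ℕ} (G : (Fin p → ℝ) → ℝ) : Prop :=
  (∀ x, G x = 0 ↔ x = 0) ∧ (∀ (a : ℝ) x, G (a • x) = |a| * G x) ∧
    (∀ x z, G (x + z) ≤ G x + G z)

/-- `F : ℝ^p → (−∞, +∞]` is proper, convex and lower semicontinuous. -/
def ProperConvexLsc {p : ℕ} (F : (Fin p → ℝ) → EReal) : Prop :=
  (∀ w, F w ≠ ⊥) ∧ (∃ w, F w ≠ ⊤) ∧
    (∀ (w₁ w₂ : Fin p → ℝ) (a b : ℝ), 0 ≤ a → 0 ≤ b → a + b = 1 →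
      F (a • w₁ + b • w₂) ≤ (a : EReal) * F w₁ + (b : EReal) * F w₂) ∧
    LowerSemicontinuous F

/-- The convex-concave saddle function φ(w,v) = ⟨Xᵀ(y − Xw), v⟩ + F(w) − G(v). -/
def phi {n p : ℕ} (X : Matrix (Fin n) (Fin p) ℝ) (y : Fin n → ℝ)
    (F : (Fin p → ℝ) → EReal) (G : (Fin p → ℝ) → ℝ)
    (w v : Fin p → ℝ) : EReal :=
  ((dotp (Xᵀ.mulVec (y - X.mulVec w)) v : ℝ) : EReal) + F w - ((G v : ℝ) : EReal)

/-- `(wstar, vstar)` is a saddle point of φ. -/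
def IsSaddle {n p : ℕ} (X : Matrix (Fin n) (Fin p) ℝ) (y : Fin n → ℝ)
    (F : (Fin p → ℝ) → EReal) (G : (Fin p → ℝ) → ℝ)
    (wstar vstar : Fin p → ℝ) : Prop :=
  ∀ w v, phi X y F G wstar v ≤ phi X y F G wstar vstar ∧
    phi X y F G wstar vstar ≤ phi X y F G w vstar

/-!
The iteration is the Chambolle–Pock primal–dual method for `min_w max_v ⟪K w, v⟫ + F w - g v`
with `K = -XᵀX` and `g = G - ⟪Xᵀy, ·⟫`; absorbing the linear term of `φ` into `g` is what shifts
the centre of the dual prox step by `σ Xᵀy`.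

For a saddle point `(w*, v*)`, adding the variational inequalities of the two prox steps to the
saddle inequalities gives the descent
`E (k + 1) + (1 - ρ) (σ ‖w_{k+1} - w_k‖² + τ ‖v_{k+1} - v_k‖²) ≤ E k` of the energy
`E k = σ ‖w_k - w*‖² + τ ‖v_k - v*‖² - 2τσ ⟪K (w'_k - w_k), v* - v_k⟫ + ρ σ ‖w'_k - w_k‖²`,
where `ρ = ‖K‖ √(τσ) < 1`: the extrapolation `w'_{k+1} - w_{k+1} = w_{k+1} - w_k` makes the cross
terms telescope, and Cauchy–Schwarz with AM-GM gives
`E k ≥ (1 - ρ) (σ ‖w_k - w*‖² + τ ‖v_k - v*‖²)`. So the iterates are bounded and their increments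
are square summable, and the limit of a convergent subsequence is a saddle point (pass to the
limit in the variational inequalities, using lower semicontinuity of `F`). Running the energy
argument with this limit as `(w*, v*)`, the energy is nonincreasing and tends to `0` along the
subsequence, hence along the whole sequence.
-/

open Set Filter Topology
open scoped RealInnerProductSpace InnerProduct

theorem LowerSemicontinuous.le_of_tendsto {X ι β : Type*} [TopologicalSpace X] [LinearOrder β]
    [TopologicalSpace β] [OrderTopology β] [DenselyOrdered β] {F : X → β}
    (hF : LowerSemicontinuous F) {l : Filter ι} [l.NeBot] {x : ι → X} {x₀ : X} {a : ι → β}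
    {a₀ : β} (hx : Tendsto x l (𝓝 x₀)) (ha : Tendsto a l (𝓝 a₀)) (hle : ∀ i, F (x i) ≤ a i) :
    F x₀ ≤ a₀ := by
  by_contra! hlt
  obtain ⟨c, hac, hcF⟩ := exists_between hlt
  obtain ⟨i, hFi, hai⟩ :=
    ((hx.eventually (hF x₀ c hcF)).and (ha.eventually (gt_mem_nhds hac))).exists
  exact (hle i).not_gt (hai.trans hFi)

theorem Antitone.tendsto_of_subseq {u : ℕ → ℝ} (hu : Antitone u) {φ : ℕ → ℕ}
    (hφ : Tendsto φ atTop atTop) {a : ℝ} (h : Tendsto (u ∘ φ) atTop (𝓝 a)) :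
    Tendsto u atTop (𝓝 a) := by
  rcases tendsto_atTop_of_antitone hu with hbot | ⟨l, hl⟩
  · exact absurd h (not_tendsto_nhds_of_tendsto_atBot (hbot.comp hφ) a)
  · rwa [tendsto_nhds_unique h (hl.comp hφ)]

theorem tendsto_atTop_zero_of_succ_add_le {a e : ℕ → ℝ} (ha : ∀ k, 0 ≤ a k)
    (he : ∀ k, 0 ≤ e k) (h : ∀ k, e (k + 1) + a k ≤ e k) : Tendsto a atTop (𝓝 0) := by
  refine (summable_of_sum_range_le (c := e 0) ha fun m => ?_).tendsto_atTop_zero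
  have htel : ∀ m, ∑ k ∈ Finset.range m, a k ≤ e 0 - e m := by
    intro m
    induction m with
    | zero => simp
    | succ m ih => rw [Finset.sum_range_succ]; linarith [h m]
  linarith [htel m, he m]

theorem tendsto_of_mul_norm_sq_le {E : Type*} [SeminormedAddCommGroup E] {x : ℕ → E} {a : E}
    {e : ℕ → ℝ} {c : ℝ} (hc : 0 < c) (he : Tendsto e atTop (𝓝 0))
    (hle : ∀ k, c * ‖x k - a‖ ^ 2 ≤ e k) : Tendsto x atTop (𝓝 a) := by
  rw [tendsto_iff_norm_sub_tendsto_zero]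
  have hroot : Tendsto (fun k => √(e k / c)) atTop (𝓝 0) := by
    simpa using (he.div_const c).sqrt
  refine squeeze_zero (fun k => norm_nonneg _) (fun k => ?_) hroot
  rw [← Real.sqrt_sq (norm_nonneg (x k - a))]
  exact Real.sqrt_le_sqrt ((le_div_iff₀ hc).2 (by linarith [hle k]))

theorem IsMinOn.toReal_of_ereal {α : Type*} {F : α → EReal} (hF : ∀ u, F u ≠ ⊥) {q : α → ℝ}
    {t : ℝ} (ht : 0 < t) {x u₀ : α}
    (hmin : IsMinOn (fun u => ((q u : ℝ) : EReal) + t * F u) univ x) (hu₀ : F u₀ ≠ ⊤) :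
    F x ≠ ⊤ ∧ IsMinOn (fun u => q u + t * (F u).toReal) {u | F u ≠ ⊤} x := by
  have hreal : ∀ u, F u ≠ ⊤ →
      ((q u : ℝ) : EReal) + t * F u = ((q u + t * (F u).toReal : ℝ) : EReal) := by
    intro u hu
    rw [EReal.coe_add, EReal.coe_mul, EReal.coe_toReal hu (hF u)]
  have hx : F x ≠ ⊤ := by
    intro hx
    have h := isMinOn_univ_iff.1 hmin u₀
    rw [hx, EReal.coe_mul_top_of_pos ht, EReal.coe_add_top, hreal u₀ hu₀] at h
    exact EReal.coe_ne_top _ (top_le_iff.1 h)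
  refine ⟨hx, isMinOn_iff.2 fun u hu => ?_⟩
  have h := isMinOn_univ_iff.1 hmin u
  rwa [hreal x hx, hreal u hu, EReal.coe_le_coe_iff] at h

theorem convexOn_toReal_of_ereal {E : Type*} [AddCommGroup E] [Module ℝ E] {F : E → EReal}
    (hF : ∀ x, F x ≠ ⊥)
    (hconv : ∀ (x y : E) (a b : ℝ), 0 ≤ a → 0 ≤ b → a + b = 1 →
      F (a • x + b • y) ≤ (a : EReal) * F x + (b : EReal) * F y) :
    ConvexOn ℝ {x | F x ≠ ⊤} fun x => (F x).toReal := by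
  have hcomb : ∀ {x y : E} (a b : ℝ), F x ≠ ⊤ → F y ≠ ⊤ →
      (a : EReal) * F x + (b : EReal) * F y =
        ((a * (F x).toReal + b * (F y).toReal : ℝ) : EReal) := by
    intro x y a b hx hy
    rw [EReal.coe_add, EReal.coe_mul, EReal.coe_mul, EReal.coe_toReal hx (hF x),
      EReal.coe_toReal hy (hF y)]
  refine ⟨fun x hx y hy a b ha hb hab => ?_, fun x hx y hy a b ha hb hab => ?_⟩
  · have h := hconv x y a b ha hb hab
    rw [hcomb a b hx hy] at h
    exact ne_top_of_le_ne_top (EReal.coe_ne_top _) h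
  · have h := hconv x y a b ha hb hab
    rw [hcomb a b hx hy] at h
    rw [← EReal.coe_le_coe_iff,
      EReal.coe_toReal (ne_top_of_le_ne_top (EReal.coe_ne_top _) h) (hF _)]
    exact h

structure IsClosedProperConvex {E : Type*} [AddCommGroup E] [Module ℝ E] [TopologicalSpace E]
    (F : E → EReal) : Prop where
  ne_bot : ∀ x, F x ≠ ⊥
  exists_ne_top : ∃ x, F x ≠ ⊤
  convexOn : ConvexOn ℝ {x | F x ≠ ⊤} fun x => (F x).toReal
  lsc : LowerSemicontinuous F

section Prox

variable {E : Type*} [NormedAddCommGroup E] [InnerProductSpace ℝ E]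

theorem ConvexOn.inner_prox_nonneg {s : Set E} {h : E → ℝ} (hh : ConvexOn ℝ s h) {t : ℝ}
    (ht : 0 ≤ t) {z x : E} (hx : x ∈ s)
    (hmin : IsMinOn (fun u => ‖u - z‖ ^ 2 / 2 + t * h u) s x) {u : E} (hu : u ∈ s) :
    0 ≤ ⟪x - z, u - x⟫ + t * (h u - h x) := by
  -- compare `x` with the points `(1 - θ) x + θ u`, divide by `θ` and let `θ → 0`
  have hseg : ∀ θ ∈ Ioo (0 : ℝ) 1,
      0 ≤ ⟪x - z, u - x⟫ + t * (h u - h x) + θ * (‖u - x‖ ^ 2 / 2) := by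
    rintro θ ⟨hθ0, hθ1⟩
    have hmem : (1 - θ) • x + θ • u ∈ s := hh.1 hx hu (by linarith) hθ0.le (by ring)
    have hconv : h ((1 - θ) • x + θ • u) ≤ (1 - θ) * h x + θ * h u :=
      hh.2 hx hu (by linarith) hθ0.le (by ring)
    have hexp : ‖(1 - θ) • x + θ • u - z‖ ^ 2 =
        ‖x - z‖ ^ 2 + 2 * θ * ⟪x - z, u - x⟫ + θ ^ 2 * ‖u - x‖ ^ 2 := by
      rw [show (1 - θ) • x + θ • u - z = (x - z) + θ • (u - x) by module, norm_add_sq_real,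
        inner_smul_right, norm_smul, mul_pow, Real.norm_eq_abs, sq_abs]
      ring
    have hle := isMinOn_iff.1 hmin _ hmem
    simp only [hexp] at hle
    nlinarith [mul_le_mul_of_nonneg_left hconv ht]
  have hlim : Tendsto (fun θ : ℝ => ⟪x - z, u - x⟫ + t * (h u - h x) + θ * (‖u - x‖ ^ 2 / 2))
      (𝓝[>] 0) (𝓝 (⟪x - z, u - x⟫ + t * (h u - h x))) := by
    refine tendsto_nhdsWithin_of_tendsto_nhds (Continuous.tendsto' ?_ 0 _ (by simp))
    fun_prop
  exact ge_of_tendsto hlim (eventually_of_mem (Ioo_mem_nhdsGT one_pos) hseg)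

theorem isMinOn_prox_add_smul_iff {s : Set E} {h : E → ℝ} {t : ℝ} {z c x : E} :
    IsMinOn (fun u => ‖u - (z + t • c)‖ ^ 2 / 2 + t * h u) s x ↔
      IsMinOn (fun u => ‖u - z‖ ^ 2 / 2 + t * (h u - ⟪c, u⟫)) s x := by
  have hshift : ∀ u, ‖u - (z + t • c)‖ ^ 2 / 2 + t * h u =
      ‖u - z‖ ^ 2 / 2 + t * (h u - ⟪c, u⟫) + (t * ⟪c, z⟫ + t ^ 2 * ‖c‖ ^ 2 / 2) := by
    intro u
    rw [show u - (z + t • c) = (u - z) - t • c by abel, norm_sub_sq_real, inner_smul_right,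
      norm_smul, mul_pow, Real.norm_eq_abs, sq_abs, inner_sub_left, real_inner_comm c u,
      real_inner_comm c z]
    ring
  simp only [isMinOn_iff, hshift, add_le_add_iff_right]

end Prox

section ChambollePock

variable {E V : Type*} [NormedAddCommGroup E] [InnerProductSpace ℝ E]
  [NormedAddCommGroup V] [InnerProductSpace ℝ V]

def cpLagrangian (K : E →L[ℝ] V) (F : E → EReal) (g : V → ℝ) (x : E) (y : V) : EReal :=
  ((⟪K x, y⟫ - g y : ℝ) : EReal) + F x

def cpRatio (K : E →L[ℝ] V) (τ σ : ℝ) : ℝ := ‖K‖ * √(τ * σ)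

def cpEnergy (K : E →L[ℝ] V) (τ σ : ℝ) (xs : E) (ys : V) (x x' : E) (y : V) : ℝ :=
  σ * ‖x - xs‖ ^ 2 + τ * ‖y - ys‖ ^ 2 - 2 * τ * σ * ⟪K (x' - x), ys - y⟫ +
    cpRatio K τ σ * (σ * ‖x' - x‖ ^ 2)

variable {K : E →L[ℝ] V} {F : E → EReal} {g : V → ℝ} {τ σ : ℝ}

theorem cpLagrangian_of_eq_top {x : E} (hx : F x = ⊤) (y : V) :
    cpLagrangian K F g x y = ⊤ := by
  rw [cpLagrangian, hx, EReal.coe_add_top]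

theorem cpLagrangian_of_ne_top {x : E} (hx : F x ≠ ⊤) (hx' : F x ≠ ⊥) (y : V) :
    cpLagrangian K F g x y = ((⟪K x, y⟫ - g y + (F x).toReal : ℝ) : EReal) := by
  rw [cpLagrangian, EReal.coe_add, EReal.coe_toReal hx hx']

theorem isSaddlePointOn_cpLagrangian_iff (hF_bot : ∀ x, F x ≠ ⊥) (hF_dom : ∃ x, F x ≠ ⊤)
    {xs : E} {ys : V} :
    IsSaddlePointOn univ univ (cpLagrangian K F g) xs ys ↔
      F xs ≠ ⊤ ∧ (∀ y, ⟪K xs, y⟫ - g y ≤ ⟪K xs, ys⟫ - g ys) ∧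
        ∀ x, F x ≠ ⊤ → ⟪K xs, ys⟫ + (F xs).toReal ≤ ⟪K x, ys⟫ + (F x).toReal := by
  constructor
  · intro h
    have hle : ∀ x y, cpLagrangian K F g xs y ≤ cpLagrangian K F g x ys :=
      fun x y => h x trivial y trivial
    obtain ⟨x₀, hx₀⟩ := hF_dom
    have hxs : F xs ≠ ⊤ := by
      intro htop
      have h₀ := hle x₀ ys
      rw [cpLagrangian_of_eq_top htop, cpLagrangian_of_ne_top hx₀ (hF_bot x₀)] at h₀
      exact EReal.coe_ne_top _ (top_le_iff.1 h₀)
    refine ⟨hxs, fun y => ?_, fun x hx => ?_⟩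
    · have h₁ := hle xs y
      rw [cpLagrangian_of_ne_top hxs (hF_bot xs), cpLagrangian_of_ne_top hxs (hF_bot xs),
        EReal.coe_le_coe_iff] at h₁
      linarith
    · have h₂ := hle x ys
      rw [cpLagrangian_of_ne_top hxs (hF_bot xs), cpLagrangian_of_ne_top hx (hF_bot x),
        EReal.coe_le_coe_iff] at h₂
      linarith
  · rintro ⟨hxs, hdual, hprimal⟩ x - y -
    by_cases hx : F x = ⊤
    · rw [cpLagrangian_of_eq_top hx]
      exact le_top
    · rw [cpLagrangian_of_ne_top hxs (hF_bot xs), cpLagrangian_of_ne_top hx (hF_bot x),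
        EReal.coe_le_coe_iff]
      linarith [hdual y, hprimal x hx]

theorem cpRatio_lt_one (hτ : 0 ≤ τ) (hσ : 0 ≤ σ) (h : τ * σ * ‖K‖ ^ 2 < 1) :
    cpRatio K τ σ < 1 := by
  have hsq : cpRatio K τ σ ^ 2 = τ * σ * ‖K‖ ^ 2 := by
    rw [cpRatio, mul_pow, Real.sq_sqrt (mul_nonneg hτ hσ)]
    ring
  nlinarith [mul_nonneg (norm_nonneg K) (Real.sqrt_nonneg (τ * σ))]

theorem two_mul_inner_apply_le_cpRatio (hτ : 0 ≤ τ) (hσ : 0 ≤ σ) (a : E) (c : V) :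
    2 * τ * σ * ⟪K a, c⟫ ≤ cpRatio K τ σ * (σ * ‖a‖ ^ 2 + τ * ‖c‖ ^ 2) := by
  have hCS : ⟪K a, c⟫ ≤ ‖K‖ * ‖a‖ * ‖c‖ :=
    (real_inner_le_norm _ _).trans (mul_le_mul_of_nonneg_right (K.le_opNorm a) (norm_nonneg c))
  have hAMGM : 2 * √(τ * σ) * (‖a‖ * ‖c‖) ≤ σ * ‖a‖ ^ 2 + τ * ‖c‖ ^ 2 := by
    rw [Real.sqrt_mul hτ]
    nlinarith [sq_nonneg (√σ * ‖a‖ - √τ * ‖c‖), Real.sq_sqrt hτ, Real.sq_sqrt hσ]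
  have hts : τ * σ = √(τ * σ) * √(τ * σ) := (Real.mul_self_sqrt (mul_nonneg hτ hσ)).symm
  calc 2 * τ * σ * ⟪K a, c⟫ ≤ 2 * (τ * σ) * (‖K‖ * ‖a‖ * ‖c‖) := by
        nlinarith [mul_nonneg hτ hσ]
    _ = ‖K‖ * √(τ * σ) * (2 * √(τ * σ) * (‖a‖ * ‖c‖)) := by
        linear_combination (2 * ‖K‖ * ‖a‖ * ‖c‖) * hts
    _ ≤ cpRatio K τ σ * (σ * ‖a‖ ^ 2 + τ * ‖c‖ ^ 2) :=
        mul_le_mul_of_nonneg_left hAMGM (mul_nonneg (norm_nonneg K) (Real.sqrt_nonneg _))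

theorem one_sub_cpRatio_mul_le_cpEnergy (hτ : 0 ≤ τ) (hσ : 0 ≤ σ) (xs x x' : E) (ys y : V) :
    (1 - cpRatio K τ σ) * (σ * ‖x - xs‖ ^ 2 + τ * ‖y - ys‖ ^ 2) ≤
      cpEnergy K τ σ xs ys x x' y := by
  have hcross := two_mul_inner_apply_le_cpRatio (K := K) hτ hσ (x' - x) (ys - y)
  rw [norm_sub_rev ys y] at hcross
  have hρ : 0 ≤ cpRatio K τ σ * (σ * ‖x - xs‖ ^ 2) :=
    mul_nonneg (mul_nonneg (norm_nonneg K) (Real.sqrt_nonneg _)) (by positivity)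
  rw [cpEnergy]
  nlinarith

section Adjoint

variable [CompleteSpace E] [CompleteSpace V]

theorem cp_step_norm_sq_le (hτ : 0 ≤ τ) (hσ : 0 ≤ σ) {w w' w₁ ws : E} {v v₁ vs : V}
    {f₁ fs g₁ gs : ℝ}
    (hdual : 0 ≤ ⟪v₁ - (v + σ • K w'), vs - v₁⟫ + σ * (gs - g₁))
    (hprimal : 0 ≤ ⟪w₁ - (w - τ • (K†) v₁), ws - w₁⟫ + τ * (fs - f₁))
    (hgap : ⟪K ws, v₁⟫ - g₁ + fs ≤ ⟪K w₁, vs⟫ - gs + f₁) :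
    σ * ‖w₁ - ws‖ ^ 2 + τ * ‖v₁ - vs‖ ^ 2 + σ * ‖w₁ - w‖ ^ 2 + τ * ‖v₁ - v‖ ^ 2 ≤
      σ * ‖w - ws‖ ^ 2 + τ * ‖v - vs‖ ^ 2 + 2 * τ * σ * ⟪K (w₁ - w'), vs - v₁⟫ := by
  -- three-point identities `2⟪b - a, c - b⟫ = ‖c - a‖² - ‖b - a‖² - ‖c - b‖²`
  have hv3 := norm_add_sq_real (v₁ - v) (vs - v₁)
  have hw3 := norm_add_sq_real (w₁ - w) (ws - w₁)
  rw [show v₁ - v + (vs - v₁) = -(v - vs) by abel, norm_neg] at hv3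
  rw [show w₁ - w + (ws - w₁) = -(w - ws) by abel, norm_neg] at hw3
  rw [show v₁ - (v + σ • K w') = (v₁ - v) - σ • K w' by abel, inner_sub_left,
    real_inner_smul_left] at hdual
  rw [show w₁ - (w - τ • (K†) v₁) = (w₁ - w) + τ • (K†) v₁ by abel, inner_add_left,
    real_inner_smul_left, ContinuousLinearMap.adjoint_inner_left] at hprimal
  have hbilin : ⟪K (w₁ - w'), vs - v₁⟫ =
      -⟪K w', vs - v₁⟫ + ⟪v₁, K (ws - w₁)⟫ + ⟪K w₁, vs⟫ - ⟪K ws, v₁⟫ := by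
    simp only [map_sub, inner_sub_left, inner_sub_right, real_inner_comm (K ws) v₁,
      real_inner_comm (K w₁) v₁]
    ring
  rw [norm_sub_rev v₁ v, norm_sub_rev w₁ w, norm_sub_rev vs v₁, norm_sub_rev ws w₁] at *
  linarith [mul_nonneg hτ hdual, mul_nonneg hσ hprimal,
    mul_le_mul_of_nonneg_left hgap (mul_nonneg hτ hσ), congrArg (τ * ·) hv3,
    congrArg (σ * ·) hw3, congrArg (τ * σ * ·) hbilin]

structure IsChambollePockSeq (K : E →L[ℝ] V) (F : E → EReal) (g : V → ℝ) (τ σ : ℝ)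
    (w w' : ℕ → E) (v : ℕ → V) : Prop where
  dual_step : ∀ k,
    IsMinOn (fun u => ‖u - (v k + σ • K (w' k))‖ ^ 2 / 2 + σ * g u) univ (v (k + 1))
  primal_step : ∀ k,
    IsMinOn (fun u => ((‖u - (w k - τ • (K†) (v (k + 1)))‖ ^ 2 / 2 : ℝ) : EReal) + τ * F u)
      univ (w (k + 1))
  extrapolate : ∀ k, w' (k + 1) = (2 : ℝ) • w (k + 1) - w k

namespace IsChambollePockSeq

variable {w w' : ℕ → E} {v : ℕ → V}

theorem dual_inner_nonneg (hs : IsChambollePockSeq K F g τ σ w w' v) (hg : ConvexOn ℝ univ g)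
    (hσ : 0 ≤ σ) (k : ℕ) (u : V) :
    0 ≤ ⟪v (k + 1) - (v k + σ • K (w' k)), u - v (k + 1)⟫ + σ * (g u - g (v (k + 1))) :=
  hg.inner_prox_nonneg hσ (mem_univ _) (hs.dual_step k) (mem_univ u)

theorem primal_ne_top (hs : IsChambollePockSeq K F g τ σ w w' v) (hF : IsClosedProperConvex F)
    (hτ : 0 < τ) (k : ℕ) : F (w (k + 1)) ≠ ⊤ :=
  ((hs.primal_step k).toReal_of_ereal hF.ne_bot hτ hF.exists_ne_top.choose_spec).1

theorem primal_inner_nonneg (hs : IsChambollePockSeq K F g τ σ w w' v)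
    (hF : IsClosedProperConvex F) (hτ : 0 < τ) (k : ℕ) {u : E} (hu : F u ≠ ⊤) :
    0 ≤ ⟪w (k + 1) - (w k - τ • (K†) (v (k + 1))), u - w (k + 1)⟫ +
      τ * ((F u).toReal - (F (w (k + 1))).toReal) :=
  have ⟨hx, hmin⟩ := (hs.primal_step k).toReal_of_ereal hF.ne_bot hτ hu
  hF.convexOn.inner_prox_nonneg hτ.le hx hmin hu

theorem extrapolate_sub (hs : IsChambollePockSeq K F g τ σ w w' v) (k : ℕ) :
    w' (k + 1) - w (k + 1) = w (k + 1) - w k := by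
  rw [hs.extrapolate k]
  module

theorem cpEnergy_succ_add_le (hs : IsChambollePockSeq K F g τ σ w w' v)
    (hF : IsClosedProperConvex F) (hg : ConvexOn ℝ univ g) (hτ : 0 < τ) (hσ : 0 < σ) {ws : E}
    {vs : V} (hsad : IsSaddlePointOn univ univ (cpLagrangian K F g) ws vs) (k : ℕ) :
    cpEnergy K τ σ ws vs (w (k + 1)) (w' (k + 1)) (v (k + 1)) +
        (1 - cpRatio K τ σ) * (σ * ‖w (k + 1) - w k‖ ^ 2 + τ * ‖v (k + 1) - v k‖ ^ 2) ≤
      cpEnergy K τ σ ws vs (w k) (w' k) (v k) := by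
  obtain ⟨hws, hsad_dual, hsad_primal⟩ :=
    (isSaddlePointOn_cpLagrangian_iff hF.ne_bot hF.exists_ne_top).1 hsad
  have hw₁ := hs.primal_ne_top hF hτ k
  have hstep := cp_step_norm_sq_le hτ.le hσ.le (hs.dual_inner_nonneg hg hσ.le k vs)
    (hs.primal_inner_nonneg hF hτ k hws) (by linarith [hsad_dual (v (k + 1)), hsad_primal _ hw₁])
  have hcross :=
    two_mul_inner_apply_le_cpRatio (K := K) hτ.le hσ.le (w' k - w k) (v (k + 1) - v k)
  -- the extrapolation makes the cross term of `hstep` telescope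
  have hsplit : ⟪K (w (k + 1) - w' k), vs - v (k + 1)⟫ =
      ⟪K (w (k + 1) - w k), vs - v (k + 1)⟫ - ⟪K (w' k - w k), vs - v k⟫ +
        ⟪K (w' k - w k), v (k + 1) - v k⟫ := by
    simp only [map_sub, inner_sub_left, inner_sub_right]
    ring
  rw [cpEnergy, cpEnergy, hs.extrapolate_sub k]
  linarith [congrArg (2 * τ * σ * ·) hsplit]

theorem cpEnergy_antitone (hs : IsChambollePockSeq K F g τ σ w w' v)
    (hF : IsClosedProperConvex F) (hg : ConvexOn ℝ univ g) (hτ : 0 < τ) (hσ : 0 < σ)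
    (hρ : cpRatio K τ σ < 1) {ws : E} {vs : V}
    (hsad : IsSaddlePointOn univ univ (cpLagrangian K F g) ws vs) :
    Antitone fun k => cpEnergy K τ σ ws vs (w k) (w' k) (v k) :=
  antitone_nat_of_succ_le fun k => by
    have hres : 0 ≤ (1 - cpRatio K τ σ) *
        (σ * ‖w (k + 1) - w k‖ ^ 2 + τ * ‖v (k + 1) - v k‖ ^ 2) :=
      mul_nonneg (sub_pos.2 hρ).le (by positivity)
    linarith [hs.cpEnergy_succ_add_le hF hg hτ hσ hsad k]

theorem tendsto_sub_succ (hs : IsChambollePockSeq K F g τ σ w w' v)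
    (hF : IsClosedProperConvex F) (hg : ConvexOn ℝ univ g) (hτ : 0 < τ) (hσ : 0 < σ)
    (hρ : cpRatio K τ σ < 1) {ws : E} {vs : V}
    (hsad : IsSaddlePointOn univ univ (cpLagrangian K F g) ws vs) :
    Tendsto (fun k => w (k + 1) - w k) atTop (𝓝 0) ∧
      Tendsto (fun k => v (k + 1) - v k) atTop (𝓝 0) := by
  have h1ρ : 0 < 1 - cpRatio K τ σ := sub_pos.2 hρ
  have hres : Tendsto (fun k => (1 - cpRatio K τ σ) *
      (σ * ‖w (k + 1) - w k‖ ^ 2 + τ * ‖v (k + 1) - v k‖ ^ 2)) atTop (𝓝 0) :=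
    tendsto_atTop_zero_of_succ_add_le (fun k => by positivity)
      (fun k => (mul_nonneg h1ρ.le (by positivity)).trans
        (one_sub_cpRatio_mul_le_cpEnergy hτ.le hσ.le _ _ _ _ _))
      (hs.cpEnergy_succ_add_le hF hg hτ hσ hsad)
  constructor
  · refine tendsto_of_mul_norm_sq_le (mul_pos h1ρ hσ) hres fun k => ?_
    rw [sub_zero]
    nlinarith [mul_nonneg h1ρ.le (mul_nonneg hτ.le (sq_nonneg ‖v (k + 1) - v k‖))]
  · refine tendsto_of_mul_norm_sq_le (mul_pos h1ρ hτ) hres fun k => ?_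
    rw [sub_zero]
    nlinarith [mul_nonneg h1ρ.le (mul_nonneg hσ.le (sq_nonneg ‖w (k + 1) - w k‖))]

theorem dual_optimal_of_tendsto (hs : IsChambollePockSeq K F g τ σ w w' v)
    (hg : ConvexOn ℝ univ g) (hgc : Continuous g) (hσ : 0 < σ) {φ : ℕ → ℕ} {wh : E} {vh : V}
    (hw' : Tendsto (w' ∘ φ) atTop (𝓝 wh)) (hv : Tendsto (v ∘ φ) atTop (𝓝 vh))
    (hv₁ : Tendsto (fun k => v (φ k + 1)) atTop (𝓝 vh)) (u : V) :
    ⟪K wh, u⟫ - g u ≤ ⟪K wh, vh⟫ - g vh := by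
  have hlim : Tendsto (fun k =>
      ⟪v (φ k + 1) - (v (φ k) + σ • K (w' (φ k))), u - v (φ k + 1)⟫ +
        σ * (g u - g (v (φ k + 1)))) atTop
      (𝓝 (⟪vh - (vh + σ • K wh), u - vh⟫ + σ * (g u - g vh))) :=
    ((hv₁.sub (hv.add (((K.continuous.tendsto wh).comp hw').const_smul σ))).inner
      (tendsto_const_nhds.sub hv₁)).add
      ((tendsto_const_nhds.sub ((hgc.tendsto vh).comp hv₁)).const_mul σ)
  have h := ge_of_tendsto' hlim fun k => hs.dual_inner_nonneg hg hσ.le (φ k) u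
  rw [show vh - (vh + σ • K wh) = -(σ • K wh) by abel, inner_neg_left, real_inner_smul_left,
    inner_sub_right] at h
  have h' : 0 ≤ σ * (⟪K wh, vh⟫ - g vh - (⟪K wh, u⟫ - g u)) := by linarith
  linarith [(mul_nonneg_iff_of_pos_left hσ).1 h']

theorem primal_optimal_of_tendsto (hs : IsChambollePockSeq K F g τ σ w w' v)
    (hF : IsClosedProperConvex F) (hτ : 0 < τ) {φ : ℕ → ℕ} {wh : E} {vh : V}
    (hw : Tendsto (w ∘ φ) atTop (𝓝 wh)) (hw₁ : Tendsto (fun k => w (φ k + 1)) atTop (𝓝 wh))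
    (hv₁ : Tendsto (fun k => v (φ k + 1)) atTop (𝓝 vh)) {u : E} (hu : F u ≠ ⊤) :
    F wh ≤ (((F u).toReal + ⟪K u - K wh, vh⟫ : ℝ) : EReal) := by
  have hval : τ⁻¹ * ⟪wh - (wh - τ • (K†) vh), u - wh⟫ = ⟪K u - K wh, vh⟫ := by
    rw [sub_sub_cancel, real_inner_smul_left, ContinuousLinearMap.adjoint_inner_left, ← map_sub,
      real_inner_comm, inv_mul_cancel_left₀ hτ.ne']
  have hlim : Tendsto (fun k => (F u).toReal + τ⁻¹ *
      ⟪w (φ k + 1) - (w (φ k) - τ • (K†) (v (φ k + 1))), u - w (φ k + 1)⟫) atTop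
      (𝓝 ((F u).toReal + ⟪K u - K wh, vh⟫)) := by
    have hz : Tendsto (fun k => w (φ k + 1) - (w (φ k) - τ • (K†) (v (φ k + 1)))) atTop
        (𝓝 (wh - (wh - τ • (K†) vh))) :=
      hw₁.sub (hw.sub ((((K†).continuous.tendsto vh).comp hv₁).const_smul τ))
    rw [← hval]
    exact tendsto_const_nhds.add ((hz.inner (tendsto_const_nhds.sub hw₁)).const_mul τ⁻¹)
  refine hF.lsc.le_of_tendsto hw₁ (EReal.tendsto_coe.2 hlim) fun k => ?_
  rw [← EReal.coe_toReal (hs.primal_ne_top hF hτ (φ k)) (hF.ne_bot _), EReal.coe_le_coe_iff,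
    ← sub_le_iff_le_add', le_inv_mul_iff₀ hτ]
  linarith [hs.primal_inner_nonneg hF hτ (φ k) hu]

theorem isSaddlePointOn_of_tendsto (hs : IsChambollePockSeq K F g τ σ w w' v)
    (hF : IsClosedProperConvex F) (hg : ConvexOn ℝ univ g) (hgc : Continuous g) (hτ : 0 < τ)
    (hσ : 0 < σ) {φ : ℕ → ℕ} {wh : E} {vh : V} (hw : Tendsto (w ∘ φ) atTop (𝓝 wh))
    (hw₁ : Tendsto (fun k => w (φ k + 1)) atTop (𝓝 wh)) (hw' : Tendsto (w' ∘ φ) atTop (𝓝 wh))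
    (hv : Tendsto (v ∘ φ) atTop (𝓝 vh)) (hv₁ : Tendsto (fun k => v (φ k + 1)) atTop (𝓝 vh)) :
    IsSaddlePointOn univ univ (cpLagrangian K F g) wh vh := by
  have hprimal := fun u (hu : F u ≠ ⊤) => hs.primal_optimal_of_tendsto hF hτ hw hw₁ hv₁ hu
  have hwh : F wh ≠ ⊤ :=
    ne_top_of_le_ne_top (EReal.coe_ne_top _) (hprimal _ hF.exists_ne_top.choose_spec)
  refine (isSaddlePointOn_cpLagrangian_iff hF.ne_bot hF.exists_ne_top).2
    ⟨hwh, hs.dual_optimal_of_tendsto hg hgc hσ hw' hv hv₁, fun x hx => ?_⟩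
  have h := hprimal x hx
  rw [← EReal.coe_toReal hwh (hF.ne_bot wh), EReal.coe_le_coe_iff, inner_sub_left] at h
  linarith

theorem tendsto_of_subseq (hs : IsChambollePockSeq K F g τ σ w w' v)
    (hF : IsClosedProperConvex F) (hg : ConvexOn ℝ univ g) (hτ : 0 < τ) (hσ : 0 < σ)
    (hρ : cpRatio K τ σ < 1) {wh : E} {vh : V}
    (hsad : IsSaddlePointOn univ univ (cpLagrangian K F g) wh vh) {φ : ℕ → ℕ}
    (hφ : Tendsto φ atTop atTop) (hw : Tendsto (w ∘ φ) atTop (𝓝 wh))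
    (hw' : Tendsto (w' ∘ φ) atTop (𝓝 wh)) (hv : Tendsto (v ∘ φ) atTop (𝓝 vh)) :
    Tendsto w atTop (𝓝 wh) ∧ Tendsto v atTop (𝓝 vh) := by
  have h1ρ : 0 < 1 - cpRatio K τ σ := sub_pos.2 hρ
  have hcont : Continuous fun z : E × E × V => cpEnergy K τ σ wh vh z.1 z.2.1 z.2.2 := by
    unfold cpEnergy
    fun_prop
  have hsub : Tendsto (fun k => cpEnergy K τ σ wh vh (w (φ k)) (w' (φ k)) (v (φ k))) atTop
      (𝓝 0) := by
    have h0 : cpEnergy K τ σ wh vh wh wh vh = 0 := by simp [cpEnergy]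
    have h := (hcont.tendsto (wh, wh, vh)).comp (hw.prodMk_nhds (hw'.prodMk_nhds hv))
    rwa [h0] at h
  have henergy := (hs.cpEnergy_antitone hF hg hτ hσ hρ hsad).tendsto_of_subseq hφ hsub
  have hlower := fun k =>
    one_sub_cpRatio_mul_le_cpEnergy (K := K) hτ.le hσ.le wh (w k) (w' k) vh (v k)
  constructor
  · refine tendsto_of_mul_norm_sq_le (mul_pos h1ρ hσ) henergy fun k => ?_
    nlinarith [hlower k, mul_nonneg h1ρ.le (mul_nonneg hτ.le (sq_nonneg ‖v k - vh‖))]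
  · refine tendsto_of_mul_norm_sq_le (mul_pos h1ρ hτ) henergy fun k => ?_
    nlinarith [hlower k, mul_nonneg h1ρ.le (mul_nonneg hσ.le (sq_nonneg ‖w k - wh‖))]

end IsChambollePockSeq

end Adjoint

namespace IsChambollePockSeq

variable [FiniteDimensional ℝ E] [FiniteDimensional ℝ V] {w w' : ℕ → E} {v : ℕ → V}

theorem exists_subseq_tendsto (hs : IsChambollePockSeq K F g τ σ w w' v)
    (hF : IsClosedProperConvex F) (hg : ConvexOn ℝ univ g) (hτ : 0 < τ) (hσ : 0 < σ)
    (hρ : cpRatio K τ σ < 1) {ws : E} {vs : V}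
    (hsad : IsSaddlePointOn univ univ (cpLagrangian K F g) ws vs) :
    ∃ (wh : E) (vh : V) (φ : ℕ → ℕ), StrictMono φ ∧ Tendsto (w ∘ φ) atTop (𝓝 wh) ∧
      Tendsto (v ∘ φ) atTop (𝓝 vh) := by
  set e₀ := cpEnergy K τ σ ws vs (w 0) (w' 0) (v 0)
  have h1ρ : 0 < 1 - cpRatio K τ σ := sub_pos.2 hρ
  have hbound : ∀ k, (1 - cpRatio K τ σ) * (σ * ‖w k - ws‖ ^ 2 + τ * ‖v k - vs‖ ^ 2) ≤ e₀ :=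
    fun k => (one_sub_cpRatio_mul_le_cpEnergy hτ.le hσ.le _ _ _ _ _).trans
      (hs.cpEnergy_antitone hF hg hτ hσ hρ hsad (Nat.zero_le k))
  have hmem : ∀ k, (w k, v k) ∈ Metric.closedBall ws √(e₀ / ((1 - cpRatio K τ σ) * σ)) ×ˢ
      Metric.closedBall vs √(e₀ / ((1 - cpRatio K τ σ) * τ)) := by
    intro k
    have hwk := mul_nonneg h1ρ.le (mul_nonneg hτ.le (sq_nonneg ‖v k - vs‖))
    have hvk := mul_nonneg h1ρ.le (mul_nonneg hσ.le (sq_nonneg ‖w k - ws‖))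
    simp only [mem_prod, Metric.mem_closedBall, dist_eq_norm]
    refine ⟨Real.le_sqrt_of_sq_le ((le_div_iff₀ (mul_pos h1ρ hσ)).2 ?_),
      Real.le_sqrt_of_sq_le ((le_div_iff₀ (mul_pos h1ρ hτ)).2 ?_)⟩ <;>
    nlinarith [hbound k]
  obtain ⟨⟨wh, vh⟩, -, φ, hφ, hlim⟩ :=
    tendsto_subseq_of_bounded (Metric.isBounded_closedBall.prod Metric.isBounded_closedBall) hmem
  exact ⟨wh, vh, φ, hφ, (continuous_fst.tendsto _).comp hlim,
    (continuous_snd.tendsto _).comp hlim⟩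

theorem exists_tendsto_isSaddlePointOn (hs : IsChambollePockSeq K F g τ σ w w' v)
    (hF : IsClosedProperConvex F) (hg : ConvexOn ℝ univ g) (hτ : 0 < τ) (hσ : 0 < σ)
    (hstep : τ * σ * ‖K‖ ^ 2 < 1)
    (hsad : ∃ ws vs, IsSaddlePointOn univ univ (cpLagrangian K F g) ws vs) :
    ∃ wh vh, IsSaddlePointOn univ univ (cpLagrangian K F g) wh vh ∧
      Tendsto w atTop (𝓝 wh) ∧ Tendsto v atTop (𝓝 vh) := by
  obtain ⟨ws, vs, hsad⟩ := hsad
  have hρ := cpRatio_lt_one hτ.le hσ.le hstep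
  obtain ⟨hΔw, hΔv⟩ := hs.tendsto_sub_succ hF hg hτ hσ hρ hsad
  obtain ⟨wh, vh, φ, hφ, hw, hv⟩ := hs.exists_subseq_tendsto hF hg hτ hσ hρ hsad
  have hφ' := hφ.tendsto_atTop
  have hw₁ : Tendsto (fun k => w (φ k + 1)) atTop (𝓝 wh) := by
    simpa using hw.add (hΔw.comp hφ')
  have hv₁ : Tendsto (fun k => v (φ k + 1)) atTop (𝓝 vh) := by
    simpa using hv.add (hΔv.comp hφ')
  have hw' : Tendsto (w' ∘ φ) atTop (𝓝 wh) := by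
    have hgap : Tendsto (fun k => w' k - w k) atTop (𝓝 0) :=
      (tendsto_add_atTop_iff_nat 1).1 (by simpa only [hs.extrapolate_sub] using hΔw)
    simpa [Function.comp_def] using hw.add (hgap.comp hφ')
  have hgc : Continuous g := continuousOn_univ.1 (hg.continuousOn isOpen_univ)
  have hsad' := hs.isSaddlePointOn_of_tendsto hF hg hgc hτ hσ hw hw₁ hw' hv hv₁
  exact ⟨wh, vh, hsad', hs.tendsto_of_subseq hF hg hτ hσ hρ hsad' hφ' hw hw' hv⟩

end IsChambollePockSeq

end ChambollePock

section Euclidean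

variable {n p : ℕ}

theorem dotp_eq_inner (x y : Fin p → ℝ) :
    dotp x y = ⟪(WithLp.toLp 2 x : EuclideanSpace ℝ (Fin p)), WithLp.toLp 2 y⟫ := by
  simp [dotp, PiLp.inner_apply, mul_comm]

theorem normSq_sub_eq (x z : Fin p → ℝ) :
    normSq (x - z) = ‖(WithLp.toLp 2 x - WithLp.toLp 2 z : EuclideanSpace ℝ (Fin p))‖ ^ 2 := by
  rw [← WithLp.toLp_sub, EuclideanSpace.real_norm_sq_eq]
  rfl

theorem opNorm_bddAbove {m k : Type} [Fintype m] [Fintype k] (A : Matrix m k ℝ) :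
    BddAbove {c | ∃ z : k → ℝ, (∑ i, z i ^ 2) ≤ 1 ∧ c = √(∑ i, (A *ᵥ z) i ^ 2)} := by
  refine ⟨√(∑ i, ∑ j, A i j ^ 2), ?_⟩
  rintro c ⟨z, hz, rfl⟩
  refine Real.sqrt_le_sqrt (Finset.sum_le_sum fun i _ => ?_)
  calc (A *ᵥ z) i ^ 2 ≤ (∑ j, A i j ^ 2) * ∑ j, z j ^ 2 :=
        Finset.sum_mul_sq_le_sq_mul_sq _ _ _
    _ ≤ ∑ j, A i j ^ 2 := mul_le_of_le_one_right (by positivity) hz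

theorem sqrt_sum_mulVec_sq_le_opNorm {m k : Type} [Fintype m] [Fintype k] (A : Matrix m k ℝ)
    {z : k → ℝ} (hz : ∑ i, z i ^ 2 ≤ 1) : √(∑ i, (A *ᵥ z) i ^ 2) ≤ opNorm A :=
  le_csSup (opNorm_bddAbove A) ⟨z, hz, rfl⟩

theorem opNorm_nonneg {m k : Type} [Fintype m] [Fintype k] (A : Matrix m k ℝ) :
    0 ≤ opNorm A := by
  simpa using sqrt_sum_mulVec_sq_le_opNorm A (z := 0) (by simp)

def gramCLM (X : Matrix (Fin n) (Fin p) ℝ) :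
    EuclideanSpace ℝ (Fin p) →L[ℝ] EuclideanSpace ℝ (Fin p) :=
  toEuclideanCLM (𝕜 := ℝ) (Xᵀ * X)

theorem gramCLM_toLp (X : Matrix (Fin n) (Fin p) ℝ) (x : Fin p → ℝ) :
    gramCLM X (WithLp.toLp 2 x) = WithLp.toLp 2 ((Xᵀ * X) *ᵥ x) :=
  rfl

theorem adjoint_gramCLM (X : Matrix (Fin n) (Fin p) ℝ) : (gramCLM X)† = gramCLM X := by
  rw [gramCLM, ← ContinuousLinearMap.star_eq_adjoint, ← map_star]
  simp [star_eq_conjTranspose, conjTranspose_eq_transpose_of_trivial]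

theorem norm_gramCLM_le (X : Matrix (Fin n) (Fin p) ℝ) :
    ‖gramCLM X‖ ≤ opNorm (Xᵀ * fromCols (1 : Matrix (Fin n) (Fin n) ℝ) (-X)) := by
  refine ContinuousLinearMap.opNorm_le_of_unit_norm (opNorm_nonneg _) fun x hx => ?_
  have hmul : (Xᵀ * fromCols (1 : Matrix (Fin n) (Fin n) ℝ) (-X)) *ᵥ
      Sum.elim 0 (-WithLp.ofLp x) = (Xᵀ * X) *ᵥ WithLp.ofLp x := by
    rw [← mulVec_mulVec, fromCols_mulVec_sumElim, ← mulVec_mulVec]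
    simp [neg_mulVec, mulVec_neg]
  have hz : ∑ i, Sum.elim (0 : Fin n → ℝ) (-WithLp.ofLp x) i ^ 2 ≤ 1 := by
    simp [Fintype.sum_sum_type, ← EuclideanSpace.real_norm_sq_eq, hx]
  have h := sqrt_sum_mulVec_sq_le_opNorm (Xᵀ * fromCols (1 : Matrix (Fin n) (Fin n) ℝ) (-X)) hz
  rw [hmul] at h
  calc ‖gramCLM X x‖ = √(‖gramCLM X x‖ ^ 2) := (Real.sqrt_sq (norm_nonneg _)).symm
    _ = √(∑ i, ((Xᵀ * X) *ᵥ WithLp.ofLp x) i ^ 2) := by rw [EuclideanSpace.real_norm_sq_eq]; rfl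
    _ ≤ _ := h

theorem ProperConvexLsc.isClosedProperConvex {F : (Fin p → ℝ) → EReal}
    (hF : ProperConvexLsc F) :
    IsClosedProperConvex fun u : EuclideanSpace ℝ (Fin p) => F (WithLp.ofLp u) where
  ne_bot _ := hF.1 _
  exists_ne_top := let ⟨x, hx⟩ := hF.2.1; ⟨WithLp.toLp 2 x, hx⟩
  convexOn := convexOn_toReal_of_ereal (fun _ => hF.1 _) fun x y a b ha hb hab => by
    simpa using hF.2.2.1 (WithLp.ofLp x) (WithLp.ofLp y) a b ha hb hab
  lsc := hF.2.2.2.comp (PiLp.continuous_ofLp 2 _)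

theorem IsNorm.convexOn {G : (Fin p → ℝ) → ℝ} (hG : IsNorm G) : ConvexOn ℝ Set.univ G := by
  refine ⟨convex_univ, fun x _ z _ a b ha hb _ => (hG.2.2 _ _).trans_eq ?_⟩
  rw [hG.2.1, hG.2.1, abs_of_nonneg ha, abs_of_nonneg hb, smul_eq_mul, smul_eq_mul]

theorem IsNorm.convexOn_sub_inner {G : (Fin p → ℝ) → ℝ} (hG : IsNorm G)
    (c : EuclideanSpace ℝ (Fin p)) :
    ConvexOn ℝ Set.univ fun u : EuclideanSpace ℝ (Fin p) => G (WithLp.ofLp u) - ⟪c, u⟫ :=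
  (hG.convexOn.comp_linearMap (WithLp.linearEquiv 2 ℝ (Fin p → ℝ)).toLinearMap).sub
    ((innerₛₗ ℝ c).concaveOn convex_univ)

theorem isChambollePockSeq_of_prox {X : Matrix (Fin n) (Fin p) ℝ} {y : Fin n → ℝ}
    {F : (Fin p → ℝ) → EReal} {G : (Fin p → ℝ) → ℝ} {τ σ : ℝ} {w v w' : ℕ → Fin p → ℝ}
    (hv : ∀ k, ∀ u : Fin p → ℝ,
      normSq (v (k+1) - (v k + σ • (Xᵀ.mulVec y - (Xᵀ * X).mulVec (w' k)))) / 2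
          + σ * G (v (k+1))
        ≤ normSq (u - (v k + σ • (Xᵀ.mulVec y - (Xᵀ * X).mulVec (w' k)))) / 2
          + σ * G u)
    (hw : ∀ k, ∀ u : Fin p → ℝ,
      ((normSq (w (k+1) - (w k + τ • (Xᵀ * X).mulVec (v (k+1)))) / 2 : ℝ) : EReal)
          + (τ : EReal) * F (w (k+1))
        ≤ ((normSq (u - (w k + τ • (Xᵀ * X).mulVec (v (k+1)))) / 2 : ℝ) : EReal)
          + (τ : EReal) * F u)
    (hw' : ∀ k, w' (k+1) = (2 : ℝ) • w (k+1) - w k) :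
    IsChambollePockSeq (-gramCLM X) (fun u => F (WithLp.ofLp u))
      (fun u => G (WithLp.ofLp u) - ⟪WithLp.toLp 2 (Xᵀ *ᵥ y), u⟫) τ σ
      (fun k => WithLp.toLp 2 (w k)) (fun k => WithLp.toLp 2 (w' k))
      (fun k => WithLp.toLp 2 (v k)) where
  dual_step k := by
    refine isMinOn_prox_add_smul_iff.1 (isMinOn_univ_iff.2 fun u => ?_)
    have hc : WithLp.toLp 2 (v k + σ • (Xᵀ *ᵥ y - (Xᵀ * X) *ᵥ w' k)) =
        WithLp.toLp 2 (v k) + σ • (-gramCLM X) (WithLp.toLp 2 (w' k)) +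
          σ • WithLp.toLp 2 (Xᵀ *ᵥ y) := by
      simp only [WithLp.toLp_add, WithLp.toLp_smul, WithLp.toLp_sub, _root_.neg_apply,
        gramCLM_toLp]
      module
    have h := hv k (WithLp.ofLp u)
    rwa [normSq_sub_eq, normSq_sub_eq, hc, WithLp.toLp_ofLp] at h
  primal_step k := by
    refine isMinOn_univ_iff.2 fun u => ?_
    have hc : WithLp.toLp 2 (w k + τ • (Xᵀ * X) *ᵥ v (k + 1)) =
        WithLp.toLp 2 (w k) - τ • ((-gramCLM X)†) (WithLp.toLp 2 (v (k + 1))) := by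
      simp only [map_neg, adjoint_gramCLM, _root_.neg_apply, gramCLM_toLp, WithLp.toLp_add,
        WithLp.toLp_smul]
      module
    have h := hw k (WithLp.ofLp u)
    rwa [normSq_sub_eq, normSq_sub_eq, hc, WithLp.toLp_ofLp] at h
  extrapolate k := by
    simp only [hw' k, WithLp.toLp_sub, WithLp.toLp_smul]

theorem phi_eq_cpLagrangian (X : Matrix (Fin n) (Fin p) ℝ) (y : Fin n → ℝ)
    {F : (Fin p → ℝ) → EReal} (hF : ∀ x, F x ≠ ⊥) (G : (Fin p → ℝ) → ℝ) (w v : Fin p → ℝ) :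
    phi X y F G w v = cpLagrangian (-gramCLM X) (fun u => F (WithLp.ofLp u))
      (fun u => G (WithLp.ofLp u) - ⟪WithLp.toLp 2 (Xᵀ *ᵥ y), u⟫)
      (WithLp.toLp 2 w) (WithLp.toLp 2 v) := by
  have hdot : dotp (Xᵀ *ᵥ (y - X *ᵥ w)) v =
      ⟪(-gramCLM X) (WithLp.toLp 2 w), WithLp.toLp 2 v⟫ -
        (G v - ⟪WithLp.toLp 2 (Xᵀ *ᵥ y), WithLp.toLp 2 v⟫) + G v := by
    rw [mulVec_sub, mulVec_mulVec, dotp_eq_inner, WithLp.toLp_sub, inner_sub_left,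
      _root_.neg_apply, gramCLM_toLp, inner_neg_left]
    ring
  rw [phi, cpLagrangian, hdot]
  by_cases hw : F w = ⊤
  · rw [hw, EReal.coe_add_top, EReal.coe_add_top, EReal.top_sub_coe]
  · rw [← EReal.coe_toReal hw (hF w)]
    norm_cast
    ring

theorem isSaddle_iff_isSaddlePointOn {X : Matrix (Fin n) (Fin p) ℝ} {y : Fin n → ℝ}
    {F : (Fin p → ℝ) → EReal} (hF : ∀ x, F x ≠ ⊥) {G : (Fin p → ℝ) → ℝ} {ws vs : Fin p → ℝ} :
    IsSaddle X y F G ws vs ↔ IsSaddlePointOn Set.univ Set.univ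
      (cpLagrangian (-gramCLM X) (fun u => F (WithLp.ofLp u))
        (fun u => G (WithLp.ofLp u) - ⟪WithLp.toLp 2 (Xᵀ *ᵥ y), u⟫))
      (WithLp.toLp 2 ws) (WithLp.toLp 2 vs) := by
  simp only [IsSaddle, IsSaddlePointOn, Set.mem_univ, forall_const, phi_eq_cpLagrangian X y hF]
  constructor
  · intro h x u
    exact (h (WithLp.ofLp x) (WithLp.ofLp u)).1.trans (h (WithLp.ofLp x) (WithLp.ofLp u)).2
  · intro h x u
    exact ⟨h _ _, h _ _⟩

end Euclidean

theorem pdsp_pointwise_convergence_general {n p : ℕ} (X : Matrix (Fin n) (Fin p) ℝ) (y : Fin n → ℝ)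
    (F : (Fin p → ℝ) → EReal) (G : (Fin p → ℝ) → ℝ)
    (hF : ProperConvexLsc F) (hG : IsNorm G)
    (L : ℝ) (hL : L = opNorm (Xᵀ * fromCols (1 : Matrix (Fin n) (Fin n) ℝ) (-X)))
    (τ σ : ℝ) (hτ : 0 < τ) (hσ : 0 < σ) (hstep : τ * σ * L ^ 2 < 1)
    (w v w' : ℕ → Fin p → ℝ)
    -- v_{k+1} = prox_{σ G}(v_k + σ(Xᵀy − XᵀX w'_k))
    (hv : ∀ k, ∀ u : Fin p → ℝ,
      normSq (v (k+1) - (v k + σ • (Xᵀ.mulVec y - (Xᵀ * X).mulVec (w' k)))) / 2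
          + σ * G (v (k+1))
        ≤ normSq (u - (v k + σ • (Xᵀ.mulVec y - (Xᵀ * X).mulVec (w' k)))) / 2
          + σ * G u)
    -- w_{k+1} = prox_{τ F}(w_k + τ XᵀX v_{k+1})
    (hw : ∀ k, ∀ u : Fin p → ℝ,
      ((normSq (w (k+1) - (w k + τ • (Xᵀ * X).mulVec (v (k+1)))) / 2 : ℝ) : EReal)
          + (τ : EReal) * F (w (k+1))
        ≤ ((normSq (u - (w k + τ • (Xᵀ * X).mulVec (v (k+1)))) / 2 : ℝ) : EReal)
          + (τ : EReal) * F u)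
    -- extrapolation step
    (hw' : ∀ k, w' (k+1) = (2 : ℝ) • w (k+1) - w k)
    -- a saddle point exists
    (hexists : ∃ wstar vstar : Fin p → ℝ, IsSaddle X y F G wstar vstar) :
    ∃ wh vh : Fin p → ℝ, IsSaddle X y F G wh vh ∧
      Filter.Tendsto w Filter.atTop (nhds wh) ∧
      Filter.Tendsto v Filter.atTop (nhds vh) := by
  have hK : τ * σ * ‖-gramCLM X‖ ^ 2 < 1 := by
    have hKL : ‖-gramCLM X‖ ≤ L := by
      rw [norm_neg, hL]
      exact norm_gramCLM_le X
    nlinarith [pow_le_pow_left₀ (norm_nonneg _) hKL 2, mul_pos hτ hσ]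
  obtain ⟨ws, vs, hsad⟩ := hexists
  obtain ⟨wh, vh, hsad', hwlim, hvlim⟩ :=
    (isChambollePockSeq_of_prox hv hw hw').exists_tendsto_isSaddlePointOn
      hF.isClosedProperConvex (hG.convexOn_sub_inner _) hτ hσ hK
      ⟨_, _, (isSaddle_iff_isSaddlePointOn hF.1).1 hsad⟩
  exact ⟨WithLp.ofLp wh, WithLp.ofLp vh, (isSaddle_iff_isSaddlePointOn hF.1).2 hsad',
    ((PiLp.continuous_ofLp 2 _).tendsto wh).comp hwlim,
    ((PiLp.continuous_ofLp 2 _).tendsto vh).comp hvlim⟩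

/-- pointwise convergence of the primal-dual iterates to a saddle point. -/
theorem pdsp_pointwise_convergence {n p : ℕ} (X : Matrix (Fin n) (Fin p) ℝ) (y : Fin n → ℝ)
    (F : (Fin p → ℝ) → EReal) (G : (Fin p → ℝ) → ℝ)
    (hF : ProperConvexLsc F) (hG : IsNorm G)
    (L : ℝ) (hL : L = opNorm (Xᵀ * fromCols (1 : Matrix (Fin n) (Fin n) ℝ) (-X)))
    (τ σ : ℝ) (hτ : 0 < τ) (hσ : 0 < σ) (hstep : τ * σ * L ^ 2 < 1)
    (w v w' : ℕ → Fin p → ℝ)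
    (hw'0 : w' 0 = w 0)
    -- v_{k+1} = prox_{σ G}(v_k + σ(Xᵀy − XᵀX w'_k))
    (hv : ∀ k, ∀ u : Fin p → ℝ,
      normSq (v (k+1) - (v k + σ • (Xᵀ.mulVec y - (Xᵀ * X).mulVec (w' k)))) / 2
          + σ * G (v (k+1))
        ≤ normSq (u - (v k + σ • (Xᵀ.mulVec y - (Xᵀ * X).mulVec (w' k)))) / 2
          + σ * G u)
    -- w_{k+1} = prox_{τ F}(w_k + τ XᵀX v_{k+1})
    (hw : ∀ k, ∀ u : Fin p → ℝ,
      ((normSq (w (k+1) - (w k + τ • (Xᵀ * X).mulVec (v (k+1)))) / 2 : ℝ) : EReal)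
          + (τ : EReal) * F (w (k+1))
        ≤ ((normSq (u - (w k + τ • (Xᵀ * X).mulVec (v (k+1)))) / 2 : ℝ) : EReal)
          + (τ : EReal) * F u)
    -- extrapolation step
    (hw' : ∀ k, w' (k+1) = (2 : ℝ) • w (k+1) - w k)
    -- a saddle point exists
    (hexists : ∃ wstar vstar : Fin p → ℝ, IsSaddle X y F G wstar vstar) :
    ∃ wh vh : Fin p → ℝ, IsSaddle X y F G wh vh ∧
      Filter.Tendsto w Filter.atTop (nhds wh) ∧
      Filter.Tendsto v Filter.atTop (nhds vh) :=
  pdsp_pointwise_convergence_general X y F G hF hG L hL τ σ hτ hσ hstep w v w' hv hw hw' hexists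
end
end

section
/- Assume λ_1 > λ_2 > … > λ_p > 0 and y_1 ≥ y_2 ≥ … ≥ y_p ≥ 0, and let w* be a solution of the orthogonal-design ODS problem: minimize J_λ(w) subject to J_λ^D(y − w) ≤ 1. Then w*_1 ≥ w*_2 ≥ … ≥ w*_p ≥ 0 and y_1 − w*_1 ≥ y_2 − w*_2 ≥ … ≥ y_p − w*_p ≥ 0. -/
noncomputable section

/-- `absSorted x k` is the `k`-th largest value (0-indexed) among `|x 0|, …, |x (p-1)|`,
i.e. the components of `|x|` sorted in nonincreasing order. -/
def absSorted {p : ℕ} (x : Fin p → ℝ) (k : Fin p) : ℝ :=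
  |x (Tuple.sort (fun i => |x i|) k.rev)|

/-- The ordered ℓ1-norm `J_λ(w) = ∑ i, λ_i |w|_(i)`. -/
def Jlam {p : ℕ} (lam : Fin p → ℝ) (w : Fin p → ℝ) : ℝ :=
  ∑ i, lam i * absSorted w i


/-- The dual norm of the ordered ℓ1-norm: `J_λ^D(x) = max {⟨x, v⟩ : J_λ(v) ≤ 1}`. -/
def JlamD {p : ℕ} (lam x : Fin p → ℝ) : ℝ :=
  sSup {c | ∃ v : Fin p → ℝ, Jlam lam v ≤ 1 ∧ c = ∑ i, x i * v i}

/-- `w` is a solution of the orthogonal-design ODS problem with data `y`: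
minimize `J_λ(w)` subject to `J_λ^D(y − w) ≤ 1`. -/
def IsODSSol {p : ℕ} (lam y w : Fin p → ℝ) : Prop :=
  JlamD lam (y - w) ≤ 1 ∧ ∀ u : Fin p → ℝ, JlamD lam (y - u) ≤ 1 → Jlam lam w ≤ Jlam lam u

/-!
Every claim follows from an exchange argument: if it failed, a small change of `w*` would keep
the residual feasible and strictly lower `J_λ`. For `0 ≤ w*_i ≤ y_i`, move `w*_i` to `0`
(resp. `y_i`): this shrinks `|w*_i|` without enlarging any `|y_k - w_k|`, and both `J_λ` and
`J_λ^D` are monotone in the absolute values of the entries. For the orderings, average an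
out-of-order pair of entries of `w*` (resp. of `y - w*`). Because `y` is sorted, the new `w` lies
strictly between `w*` and its transposition and the new residual lies between `y - w*` and its
transposition. On the first segment `J_λ` drops strictly since `λ` is strictly decreasing; on
the second the convex, permutation-invariant `J_λ^D` does not exceed `J_λ^D(y - w*)`.
-/

open Equiv

section OrderedL1

variable {p : ℕ}

def sortPerm (x : Fin p → ℝ) : Perm (Fin p) :=
  Fin.revPerm.trans (Tuple.sort fun i => |x i|)

lemma absSorted_eq_abs_sortPerm (x : Fin p → ℝ) (k : Fin p) :
    absSorted x k = |x (sortPerm x k)| := by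
  simp [absSorted, sortPerm]

lemma absSorted_antitone (x : Fin p → ℝ) : Antitone (absSorted x) :=
  fun _ _ hab => Tuple.monotone_sort (fun i => |x i|) (Fin.rev_le_rev.mpr hab)

lemma jlam_eq_sum_sortPerm (lam x : Fin p → ℝ) :
    Jlam lam x = ∑ k, lam k * |x (sortPerm x k)| := by
  simp [Jlam, absSorted_eq_abs_sortPerm]

lemma jlam_congr_abs (lam : Fin p → ℝ) {u v : Fin p → ℝ} (h : ∀ i, |u i| = |v i|) :
    Jlam lam u = Jlam lam v := by
  simp only [Jlam, absSorted, h]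

@[simp]
lemma jlam_zero (lam : Fin p → ℝ) : Jlam lam 0 = 0 := by
  simp [Jlam, absSorted]

lemma sum_mul_abs_comp_perm_le_jlam {lam : Fin p → ℝ} (hlam : Antitone lam) (x : Fin p → ℝ)
    (σ : Perm (Fin p)) : ∑ k, lam k * |x (σ k)| ≤ Jlam lam x := by
  have h := (hlam.monovary (absSorted_antitone x)).sum_mul_comp_perm_le_sum_mul
    (σ := σ.trans (sortPerm x).symm)
  rw [jlam_eq_sum_sortPerm]
  simpa [absSorted_eq_abs_sortPerm] using h

lemma jlam_comp_perm_le {lam : Fin p → ℝ} (hlam : Antitone lam) (x : Fin p → ℝ)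
    (σ : Perm (Fin p)) : Jlam lam (x ∘ σ) ≤ Jlam lam x := by
  rw [jlam_eq_sum_sortPerm lam (x ∘ σ)]
  exact sum_mul_abs_comp_perm_le_jlam hlam x ((sortPerm (x ∘ σ)).trans σ)

lemma jlam_lt_of_abs_lt {lam : Fin p → ℝ} (hlam : Antitone lam) (hpos : ∀ k, 0 < lam k)
    {u w : Fin p → ℝ} (hle : ∀ k, |u k| ≤ |w k|) {i : Fin p} (hlt : |u i| < |w i|) :
    Jlam lam u < Jlam lam w := by
  set σ := sortPerm u
  calc Jlam lam u = ∑ k, lam k * |u (σ k)| := jlam_eq_sum_sortPerm lam u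
    _ < ∑ k, lam k * |w (σ k)| := by
      refine Finset.sum_lt_sum (fun k _ => mul_le_mul_of_nonneg_left (hle _) (hpos k).le)
        ⟨σ.symm i, Finset.mem_univ _, ?_⟩
      simpa using mul_lt_mul_of_pos_left hlt (hpos (σ.symm i))
    _ ≤ Jlam lam w := sum_mul_abs_comp_perm_le_jlam hlam w σ

lemma sum_mul_sub_sum_mul_comp_swap {ι R : Type*} [Fintype ι] [DecidableEq ι] [CommRing R]
    (g f : ι → R) {i j : ι} (hij : i ≠ j) :
    ∑ k, g k * f k - ∑ k, g k * f (swap i j k) = (g i - g j) * (f i - f j) := by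
  rw [← Finset.sum_sub_distrib, Fintype.sum_eq_add i j hij fun k hk => by
    rw [swap_apply_of_ne_of_ne hk.1 hk.2, sub_self]]
  simp only [swap_apply_left, swap_apply_right]
  ring

lemma sum_mul_comp_perm_ne_comp_swap {ι R : Type*} [Fintype ι] [DecidableEq ι] [CommRing R]
    [IsDomain R] {g f : ι → R} (hg : Function.Injective g) (σ : Perm ι) {i j : ι}
    (hf : f i ≠ f j) : ∑ k, g k * f (σ k) ≠ ∑ k, g k * f (swap i j (σ k)) := by
  have hij : i ≠ j := by rintro rfl; exact hf rfl
  have e₁ : ∑ k, g k * f (σ k) = ∑ m, g (σ.symm m) * f m := by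
    rw [← Equiv.sum_comp σ (fun m => g (σ.symm m) * f m)]; simp
  have e₂ : ∑ k, g k * f (swap i j (σ k)) = ∑ m, g (σ.symm m) * f (swap i j m) := by
    rw [← Equiv.sum_comp σ (fun m => g (σ.symm m) * f (swap i j m))]; simp
  rw [e₁, e₂, ← sub_ne_zero, sum_mul_sub_sum_mul_comp_swap _ _ hij]
  exact mul_ne_zero (sub_ne_zero.mpr (hg.ne (σ.symm.injective.ne hij))) (sub_ne_zero.mpr hf)

/-- Mixing `w` with its transposition `w ∘ swap i j` strictly decreases `Jlam` unless
`|w i| = |w j|`: the mixture is bounded by the same mixture of two rearranged sums of `|w|`,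
which differ. -/
lemma jlam_lt_of_mem_openSegment_swap {lam : Fin p → ℝ} (hlam : StrictAnti lam)
    (hnn : ∀ k, 0 ≤ lam k) {w z : Fin p → ℝ} {i j : Fin p} (hw : |w i| ≠ |w j|)
    (hz : z ∈ openSegment ℝ w (w ∘ swap i j)) : Jlam lam z < Jlam lam w := by
  obtain ⟨a, b, ha, hb, hab, rfl⟩ := hz
  set σ := sortPerm (a • w + b • (w ∘ swap i j))
  set S₁ := ∑ k, lam k * |w (σ k)|
  set S₂ := ∑ k, lam k * |w (swap i j (σ k))|
  have hS₂ : S₂ ≤ Jlam lam w := sum_mul_abs_comp_perm_le_jlam hlam.antitone w (σ.trans (swap i j))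
  have hS₁₂ : S₁ ≠ S₂ :=
    sum_mul_comp_perm_ne_comp_swap (f := fun m => |w m|) hlam.injective σ hw
  calc Jlam lam (a • w + b • (w ∘ swap i j))
      ≤ ∑ k, lam k * (a * |w (σ k)| + b * |w (swap i j (σ k))|) := by
        rw [jlam_eq_sum_sortPerm]
        refine Finset.sum_le_sum fun k _ => mul_le_mul_of_nonneg_left ?_ (hnn k)
        calc |a * w (σ k) + b * w (swap i j (σ k))|
            ≤ |a * w (σ k)| + |b * w (swap i j (σ k))| := abs_add_le _ _
          _ = _ := by rw [abs_mul, abs_mul, abs_of_pos ha, abs_of_pos hb]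
    _ = a * S₁ + b * S₂ := by
        simp only [S₁, S₂, Finset.mul_sum, ← Finset.sum_add_distrib]
        exact Finset.sum_congr rfl fun k _ => by ring
    _ < Jlam lam w := by
        have hS₁ : S₁ ≤ Jlam lam w := sum_mul_abs_comp_perm_le_jlam hlam.antitone w σ
        rcases hS₁₂.lt_or_gt with h | h
        · linarith [mul_lt_mul_of_pos_left h ha, congrArg (· * S₂) hab]
        · linarith [mul_lt_mul_of_pos_left h hb, congrArg (· * S₁) hab]

end OrderedL1

section DualNorm

variable {p : ℕ} {lam : Fin p → ℝ}

lemma abs_le_sum_inv_of_jlam_le_one (hpos : ∀ k, 0 < lam k) {v : Fin p → ℝ}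
    (hv : Jlam lam v ≤ 1) (i : Fin p) : |v i| ≤ ∑ k, (lam k)⁻¹ := by
  set k := (sortPerm v).symm i
  have hk : lam k * |v i| ≤ Jlam lam v := by
    have : |v i| = absSorted v k := by simp [absSorted_eq_abs_sortPerm, k]
    rw [this]
    exact Finset.single_le_sum (f := fun m => lam m * absSorted v m)
      (fun m _ => mul_nonneg (hpos m).le (abs_nonneg _)) (Finset.mem_univ k)
  calc |v i| ≤ 1 / lam k := (le_div_iff₀' (hpos k)).mpr (hk.trans hv)
    _ = (lam k)⁻¹ := one_div _
    _ ≤ ∑ k, (lam k)⁻¹ :=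
        Finset.single_le_sum (fun m _ => (inv_pos.mpr (hpos m)).le) (Finset.mem_univ k)

lemma bddAbove_jlamD (hpos : ∀ k, 0 < lam k) (x : Fin p → ℝ) :
    BddAbove {c | ∃ v : Fin p → ℝ, Jlam lam v ≤ 1 ∧ c = ∑ i, x i * v i} := by
  refine ⟨∑ i, |x i| * ∑ k, (lam k)⁻¹, ?_⟩
  rintro _ ⟨v, hv, rfl⟩
  refine Finset.sum_le_sum fun i _ => ?_
  calc x i * v i ≤ |x i| * |v i| := by rw [← abs_mul]; exact le_abs_self _
    _ ≤ |x i| * ∑ k, (lam k)⁻¹ :=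
        mul_le_mul_of_nonneg_left (abs_le_sum_inv_of_jlam_le_one hpos hv i) (abs_nonneg _)

lemma sum_mul_le_jlamD (hpos : ∀ k, 0 < lam k) (x : Fin p → ℝ) {v : Fin p → ℝ}
    (hv : Jlam lam v ≤ 1) : ∑ i, x i * v i ≤ JlamD lam x :=
  le_csSup (bddAbove_jlamD hpos x) ⟨v, hv, rfl⟩

lemma jlamD_le_of_forall {x : Fin p → ℝ} {c : ℝ}
    (h : ∀ v, Jlam lam v ≤ 1 → ∑ i, x i * v i ≤ c) : JlamD lam x ≤ c :=
  csSup_le ⟨0, 0, by simp, by simp⟩ fun _ ⟨v, hv, hc⟩ => hc ▸ h v hv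

lemma jlamD_le_of_abs_le (hpos : ∀ k, 0 < lam k) {x' x : Fin p → ℝ}
    (h : ∀ i, |x' i| ≤ |x i|) : JlamD lam x' ≤ JlamD lam x := by
  refine jlamD_le_of_forall fun v hv => ?_
  set u : Fin p → ℝ := fun i => if 0 ≤ x i then |v i| else -|v i|
  have hu : ∀ i, |u i| = |v i| := fun i => by by_cases hxi : 0 ≤ x i <;> simp [u, hxi]
  have hxu : ∀ i, x i * u i = |x i| * |v i| := fun i => by
    by_cases hxi : 0 ≤ x i
    · simp [u, hxi, abs_of_nonneg hxi]
    · simp [u, hxi, abs_of_neg (not_le.mp hxi)]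
  calc ∑ i, x' i * v i ≤ ∑ i, x i * u i := Finset.sum_le_sum fun i _ => by
        rw [hxu]
        calc x' i * v i ≤ |x' i| * |v i| := by rw [← abs_mul]; exact le_abs_self _
          _ ≤ |x i| * |v i| := mul_le_mul_of_nonneg_right (h i) (abs_nonneg _)
    _ ≤ JlamD lam x := sum_mul_le_jlamD hpos x ((jlam_congr_abs lam hu).le.trans hv)

lemma jlamD_comp_perm_le (hlam : Antitone lam) (hpos : ∀ k, 0 < lam k) (x : Fin p → ℝ)
    (σ : Perm (Fin p)) : JlamD lam (x ∘ σ) ≤ JlamD lam x := by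
  refine jlamD_le_of_forall fun v hv => ?_
  calc ∑ i, (x ∘ σ) i * v i = ∑ i, x i * (v ∘ σ.symm) i :=
        (Equiv.sum_comp σ.symm _).symm.trans (by simp)
    _ ≤ JlamD lam x := sum_mul_le_jlamD hpos x ((jlam_comp_perm_le hlam v σ.symm).trans hv)

lemma convexOn_jlamD (hpos : ∀ k, 0 < lam k) : ConvexOn ℝ Set.univ (JlamD lam) := by
  refine ⟨convex_univ, fun x _ y _ a b ha hb _ => jlamD_le_of_forall fun v hv => ?_⟩
  calc ∑ i, (a • x + b • y) i * v i = a * ∑ i, x i * v i + b * ∑ i, y i * v i := by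
        simp only [Pi.add_apply, Pi.smul_apply, smul_eq_mul, Finset.mul_sum,
          ← Finset.sum_add_distrib]
        exact Finset.sum_congr rfl fun i _ => by ring
    _ ≤ a • JlamD lam x + b • JlamD lam y := by
        simp only [smul_eq_mul]
        gcongr <;> exact sum_mul_le_jlamD hpos _ hv

lemma jlamD_le_of_mem_segment_comp_perm (hlam : Antitone lam) (hpos : ∀ k, 0 < lam k)
    {x z : Fin p → ℝ} {σ : Perm (Fin p)} (hz : z ∈ segment ℝ x (x ∘ σ)) :
    JlamD lam z ≤ JlamD lam x :=
  ((convexOn_jlamD hpos).le_on_segment trivial trivial hz).trans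
    (max_le le_rfl (jlamD_comp_perm_le hlam hpos x σ))

end DualNorm

section Exchange

variable {ι : Type*} [DecidableEq ι]

lemma mem_openSegment_comp_swap {x x' : ι → ℝ} {i j : ι} (hij : i ≠ j)
    (hoff : ∀ k, k ≠ i → k ≠ j → x' k = x k) (hsum : x' i + x' j = x i + x j)
    (hi : x' i ∈ openSegment ℝ (x i) (x j)) : x' ∈ openSegment ℝ x (x ∘ swap i j) := by
  obtain ⟨a, b, ha, hb, hab, h⟩ := hi
  rw [smul_eq_mul, smul_eq_mul] at h
  refine ⟨a, b, ha, hb, hab, funext fun k => ?_⟩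
  simp only [Pi.add_apply, Pi.smul_apply, smul_eq_mul, Function.comp_apply]
  rcases eq_or_ne k i with rfl | hki
  · simpa [swap_apply_left] using h
  rcases eq_or_ne k j with rfl | hkj
  · rw [swap_apply_right]
    linear_combination (x i + x k) * hab - h - hsum
  · rw [swap_apply_of_ne_of_ne hki hkj, hoff k hki hkj]
    linear_combination x k * hab

lemma sub_midpoint_comp_swap_mem_openSegment {y a : ι → ℝ} {i j : ι} (hij : i ≠ j)
    (ha : a i < a j) (hy : y j ≤ y i) :
    y - midpoint ℝ a (a ∘ swap i j) ∈ openSegment ℝ (y - a) ((y - a) ∘ swap i j) := by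
  refine mem_openSegment_comp_swap hij (fun k hki hkj => ?_) ?_ ?_
  · simp [pi_midpoint_apply, swap_apply_of_ne_of_ne hki hkj]
  · simp only [Pi.sub_apply, pi_midpoint_apply, Function.comp_apply, swap_apply_left,
      swap_apply_right, midpoint_comm (a j)]
    linarith [midpoint_add_self (R := ℝ) (a i) (a j)]
  · rw [openSegment_symm, openSegment_eq_Ioo (by simp only [Pi.sub_apply]; linarith)]
    simp only [Pi.sub_apply, midpoint_eq_smul_add, Set.mem_Ioo]
    norm_num
    constructor <;> linarith

end Exchange

namespace IsODSSol

variable {p : ℕ} {lam y w : Fin p → ℝ}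

lemma jlam_le_of_jlamD_le (hsol : IsODSSol lam y w) {u : Fin p → ℝ}
    (h : JlamD lam (y - u) ≤ JlamD lam (y - w)) : Jlam lam w ≤ Jlam lam u :=
  hsol.2 u (h.trans hsol.1)

lemma abs_sub_lt_of_abs_lt (hsol : IsODSSol lam y w) (hlam : Antitone lam)
    (hpos : ∀ k, 0 < lam k) {i : Fin p} {c : ℝ} (hc : |c| < |w i|) :
    |y i - w i| < |y i - c| := by
  by_contra! hfar
  set u := Function.update w i c
  have hJ : Jlam lam u < Jlam lam w := by
    refine jlam_lt_of_abs_lt hlam hpos (i := i) (fun k => ?_) (by simpa [u] using hc)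
    rcases eq_or_ne k i with rfl | hk
    · simpa [u] using hc.le
    · simp [u, hk]
  have hD : JlamD lam (y - u) ≤ JlamD lam (y - w) := by
    refine jlamD_le_of_abs_le hpos fun k => ?_
    rcases eq_or_ne k i with rfl | hk
    · simpa [u] using hfar
    · simp [u, hk]
  exact hJ.not_ge (hsol.jlam_le_of_jlamD_le hD)

lemma nonneg (hsol : IsODSSol lam y w) (hlam : Antitone lam) (hpos : ∀ k, 0 < lam k)
    {i : Fin p} (hy : 0 ≤ y i) : 0 ≤ w i := by
  by_contra! hw
  have h := hsol.abs_sub_lt_of_abs_lt hlam hpos (c := 0) (by simpa using hw.ne)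
  rw [sub_zero, abs_of_nonneg hy, abs_of_pos (by linarith)] at h
  linarith

lemma le_data (hsol : IsODSSol lam y w) (hlam : Antitone lam) (hpos : ∀ k, 0 < lam k)
    {i : Fin p} (hy : 0 ≤ y i) : w i ≤ y i := by
  by_contra! hw
  have h := hsol.abs_sub_lt_of_abs_lt hlam hpos (c := y i)
    (by rwa [abs_of_nonneg hy, abs_of_pos (hy.trans_lt hw)])
  rw [sub_self, abs_zero] at h
  exact (abs_nonneg _).not_gt h

lemma abs_eq_of_mem_openSegment_swap (hsol : IsODSSol lam y w) (hlam : StrictAnti lam)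
    (hpos : ∀ k, 0 < lam k) {w' : Fin p → ℝ} {i j : Fin p}
    (hw' : w' ∈ openSegment ℝ w (w ∘ swap i j))
    (hres : y - w' ∈ segment ℝ (y - w) ((y - w) ∘ swap i j)) : |w i| = |w j| := by
  by_contra hne
  have hJ := jlam_lt_of_mem_openSegment_swap hlam (fun k => (hpos k).le) hne hw'
  have hD := jlamD_le_of_mem_segment_comp_perm hlam.antitone hpos hres
  exact hJ.not_ge (hsol.jlam_le_of_jlamD_le hD)

lemma antitone (hsol : IsODSSol lam y w) (hlam : StrictAnti lam) (hpos : ∀ k, 0 < lam k)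
    (hy : Antitone y) (hw : ∀ i, 0 ≤ w i) : Antitone w := by
  intro i j hij
  by_contra! hlt
  have hne : i ≠ j := by rintro rfl; exact hlt.false
  have h := hsol.abs_eq_of_mem_openSegment_swap hlam hpos (midpoint_mem_openSegment _ _)
    (openSegment_subset_segment _ _ _ (sub_midpoint_comp_swap_mem_openSegment hne hlt (hy hij)))
  rw [abs_of_nonneg (hw i), abs_of_nonneg (hw j)] at h
  exact hlt.ne h

lemma antitone_sub (hsol : IsODSSol lam y w) (hlam : StrictAnti lam) (hpos : ∀ k, 0 < lam k)
    (hy : Antitone y) (hw : ∀ i, 0 ≤ w i) : Antitone (y - w) := by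
  intro i j hij
  by_contra! hlt
  have hne : i ≠ j := by rintro rfl; exact hlt.false
  have hw' := sub_midpoint_comp_swap_mem_openSegment hne hlt (hy hij)
  rw [sub_sub_cancel] at hw'
  have h := hsol.abs_eq_of_mem_openSegment_swap hlam hpos hw'
    (by rw [sub_sub_cancel]; exact openSegment_subset_segment _ _ _ (midpoint_mem_openSegment _ _))
  rw [abs_of_nonneg (hw i), abs_of_nonneg (hw j)] at h
  simp only [Pi.sub_apply] at hlt
  linarith [hy hij]

end IsODSSol

theorem ods_sol_monotone_general {p : ℕ} (lam : Fin p → ℝ)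
    (hlam : StrictAnti lam) (hpos : ∀ i, 0 < lam i)
    (y : Fin p → ℝ) (hy : Antitone y) (hynn : ∀ i, 0 ≤ y i)
    (wstar : Fin p → ℝ) (hsol : IsODSSol lam y wstar) :
    Antitone wstar ∧ (∀ i, 0 ≤ wstar i) ∧
    Antitone (fun i => y i - wstar i) ∧ (∀ i, 0 ≤ y i - wstar i) := by
  have hw : ∀ i, 0 ≤ wstar i := fun i => hsol.nonneg hlam.antitone hpos (hynn i)
  refine ⟨hsol.antitone hlam hpos hy hw, hw, hsol.antitone_sub hlam hpos hy hw, fun i => ?_⟩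
  exact sub_nonneg.mpr (hsol.le_data hlam.antitone hpos (hynn i))

/-- for strictly decreasing positive `λ` and sorted nonnegative data `y`,
any ODS solution `w*` and the residual `y − w*` are both nonincreasing and nonnegative. -/
theorem ods_sol_monotone {p : ℕ} (hp : 0 < p) (lam : Fin p → ℝ)
    (hlam : StrictAnti lam) (hpos : ∀ i, 0 < lam i)
    (y : Fin p → ℝ) (hy : Antitone y) (hynn : ∀ i, 0 ≤ y i)
    (wstar : Fin p → ℝ) (hsol : IsODSSol lam y wstar) :
    Antitone wstar ∧ (∀ i, 0 ≤ wstar i) ∧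
    Antitone (fun i => y i - wstar i) ∧ (∀ i, 0 ≤ y i - wstar i) :=
  ods_sol_monotone_general lam hlam hpos y hy hynn wstar hsol
end
end
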